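/- arXiv:2502.10007 — 4 statements merged into one kernel-verified Lean document; each statement's English description precedes it below -/
import Mathlib

section
/- Let K be a field, V a finite-dimensional K-vector space, d ≥ 2, and f ∈ S^d V. Then prk_K(ι(f)) ≤ D·s_K(f), where D = binom(d, ⌊d/2⌋) and ι: S^d V → V^{⊗d} is the symmetrization map. -/
set_option linter.unusedSectionVars false

open PiTensorProduct
open scoped TensorProduct

section PartitionRank

variable (F : Type*) [Field F] {d : ℕ} (W : Fin d → Type*)
  [∀ i, AddCommGroup (W i)] [∀ i, Module F (W i)]

/-- Combine a family indexed by `I` and a family indexed by the complement of `I`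
into a family indexed by `Fin d`. -/
def combineVec (I : Finset (Fin d)) (v : ∀ i : {x : Fin d // x ∈ I}, W i)
    (w : ∀ i : {x : Fin d // x ∉ I}, W i) : ∀ i, W i :=
  fun i => if h : i ∈ I then v ⟨i, h⟩ else w ⟨i, h⟩

theorem combineVec_update_right (I : Finset (Fin d)) {instd : DecidableEq (Fin d)}
    {insts : DecidableEq {x : Fin d // x ∉ I}} (v : ∀ i : {x : Fin d // x ∈ I}, W i)
    (w : ∀ i : {x : Fin d // x ∉ I}, W i) (j : {x : Fin d // x ∉ I}) (x : W j) :
    combineVec W I v (Function.update w j x) =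
      Function.update (combineVec W I v w) (j : Fin d) x := by
  obtain ⟨jv, hj⟩ := j
  funext i
  rcases eq_or_ne i jv with rfl | hij
  · simp [combineVec, hj]
  · rw [Function.update_of_ne hij]
    by_cases h : i ∈ I
    · simp [combineVec, h]
    · have hne : (⟨i, h⟩ : {x : Fin d // x ∉ I}) ≠ ⟨jv, hj⟩ := by
        simpa [Subtype.ext_iff] using hij
      simp [combineVec, h, Function.update_of_ne hne]

theorem combineVec_update_left (I : Finset (Fin d)) {instd : DecidableEq (Fin d)}
    {insts : DecidableEq {x : Fin d // x ∈ I}} (v : ∀ i : {x : Fin d // x ∈ I}, W i)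
    (w : ∀ i : {x : Fin d // x ∉ I}, W i) (j : {x : Fin d // x ∈ I}) (x : W j) :
    combineVec W I (Function.update v j x) w =
      Function.update (combineVec W I v w) (j : Fin d) x := by
  obtain ⟨jv, hj⟩ := j
  funext i
  rcases eq_or_ne i jv with rfl | hij
  · simp [combineVec, hj]
  · rw [Function.update_of_ne hij]
    by_cases h : i ∈ I
    · have hne : (⟨i, h⟩ : {x : Fin d // x ∈ I}) ≠ ⟨jv, hj⟩ := by
        simpa [Subtype.ext_iff] using hij
      simp [combineVec, h, Function.update_of_ne hne]
    · simp [combineVec, h]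

/-- The inner multilinear map used to define the partition multiplication. -/
noncomputable def partMulInner (I : Finset (Fin d))
    (v : ∀ i : {x : Fin d // x ∈ I}, W i) :
    MultilinearMap F (fun i : {x : Fin d // x ∉ I} => W i) (⨂[F] i, W i) where
  toFun w := tprod F (combineVec W I v w)
  map_update_add' w j x y := by
    simp only [combineVec_update_right, MultilinearMap.map_update_add]
  map_update_smul' w j c x := by
    simp only [combineVec_update_right, MultilinearMap.map_update_smul]

/-- The outer multilinear map used to define the partition multiplication. -/
noncomputable def partMulOuter (I : Finset (Fin d)) :
    MultilinearMap F (fun i : {x : Fin d // x ∈ I} => W i)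
      ((⨂[F] i : {x : Fin d // x ∉ I}, W i) →ₗ[F] ⨂[F] i, W i) where
  toFun v := PiTensorProduct.lift (partMulInner F W I v)
  map_update_add' v j x y := by
    ext w
    simp [partMulInner, combineVec_update_left, MultilinearMap.map_update_add]
  map_update_smul' v j c x := by
    ext w
    simp [partMulInner, combineVec_update_left, MultilinearMap.map_update_smul]

/-- The canonical bilinear "partition multiplication"
`V_I ⊗ V_{I^c} → V₁ ⊗ ⋯ ⊗ V_d` realising the canonical isomorphism on pairs. -/
noncomputable def partMul (I : Finset (Fin d)) :
    (⨂[F] i : {x : Fin d // x ∈ I}, W i) →ₗ[F]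
      (⨂[F] i : {x : Fin d // x ∉ I}, W i) →ₗ[F] ⨂[F] i, W i :=
  PiTensorProduct.lift (partMulOuter F W I)

/-- Witnesses "partition rank at most `r`": a decomposition `t = Σ_{k=1}^r a_k ⊗ b_k`
with `a_k ∈ V_{I_k}`, `b_k ∈ V_{I_k^c}` for proper nonempty subsets `I_k ⊂ [d]`. -/
def PrkDecomp (t : ⨂[F] i, W i) (r : ℕ) : Prop :=
  ∃ I : Fin r → Finset (Fin d),
    (∀ k, (I k).Nonempty ∧ I k ≠ Finset.univ) ∧
    ∃ (a : ∀ k, ⨂[F] i : {x : Fin d // x ∈ I k}, W i)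
      (b : ∀ k, ⨂[F] i : {x : Fin d // x ∉ I k}, W i),
      t = ∑ k, partMul F W (I k) (a k) (b k)

/-- The partition rank of a tensor. -/
noncomputable def prk (t : ⨂[F] i, W i) : ℕ :=
  sInf {r | PrkDecomp F W t r}

/-- Witnesses "collective partition rank at most `r`" for a tuple of tensors: some
nonzero linear combination has partition rank at most `r`. -/
def CollectivePrkDecomp {m : ℕ} (t : Fin m → ⨂[F] i, W i) (r : ℕ) : Prop :=
  ∃ c : Fin m → F, c ≠ 0 ∧ PrkDecomp F W (∑ ℓ, c ℓ • t ℓ) r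

/-- The collective partition rank of a tuple of tensors. -/
noncomputable def collectivePrk {m : ℕ} (t : Fin m → ⨂[F] i, W i) : ℕ :=
  sInf {r | CollectivePrkDecomp F W t r}

end PartitionRank

section BaseChange

variable (K L : Type*) [Field K] [Field L] [Algebra K L]
variable {d : ℕ} (W : Fin d → Type*) [∀ i, AddCommGroup (W i)] [∀ i, Module K (W i)]

/-- The canonical `K`-linear map `V₁ ⊗ ⋯ ⊗ V_d → (L ⊗ V₁) ⊗_L ⋯ ⊗_L (L ⊗ V_d)`. -/
noncomputable def tensorBaseChange :
    (⨂[K] i, W i) →ₗ[K] ⨂[L] i, (L ⊗[K] W i) :=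
  PiTensorProduct.lift
    (((PiTensorProduct.tprod L (s := fun i => L ⊗[K] W i)).restrictScalars K).compLinearMap
      (fun i => TensorProduct.mk K L (W i) 1))

end BaseChange
section Border

/-- `x` lies in the Zariski closure of `S`: every polynomial function (pulled back along any
linear map to a coordinate space) that vanishes on `S` vanishes at `x`. -/
def MemZariskiClosure (F : Type*) [CommSemiring F] {W : Type*} [AddCommMonoid W] [Module F W]
    (S : Set W) (x : W) : Prop :=
  ∀ (N : ℕ) (φ : W →ₗ[F] (Fin N → F)) (P : MvPolynomial (Fin N) F),
    (∀ s ∈ S, MvPolynomial.eval (φ s) P = 0) → MvPolynomial.eval (φ x) P = 0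

variable (K : Type*) [Field K] {d : ℕ} (W : Fin d → Type*)
  [∀ i, AddCommGroup (W i)] [∀ i, Module K (W i)]

/-- The border partition rank of a tensor: the minimal `r` such that the tensor, viewed
over the algebraic closure, lies in the Zariski closure of the tensors of partition rank
at most `r`. -/
noncomputable def borderPrk (t : ⨂[K] i, W i) : ℕ :=
  sInf {r | MemZariskiClosure (AlgebraicClosure K)
    {s : ⨂[AlgebraicClosure K] i, (AlgebraicClosure K ⊗[K] W i) |
      PrkDecomp (AlgebraicClosure K) (fun i => AlgebraicClosure K ⊗[K] W i) s r}
    (tensorBaseChange K (AlgebraicClosure K) W t)}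

/-- The border collective partition rank of an `m`-tuple of tensors. -/
noncomputable def borderCollectivePrk {m : ℕ} (t : Fin m → ⨂[K] i, W i) : ℕ :=
  sInf {r | MemZariskiClosure (AlgebraicClosure K)
    {s : Fin m → ⨂[AlgebraicClosure K] i, (AlgebraicClosure K ⊗[K] W i) |
      CollectivePrkDecomp (AlgebraicClosure K) (fun i => AlgebraicClosure K ⊗[K] W i) s r}
    (fun ℓ => tensorBaseChange K (AlgebraicClosure K) W (t ℓ))}

end Border

section PiIota

variable (K : Type*) [Field K] {n : ℕ} {V : Type*} [AddCommGroup V] [Module K V]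

/-- The linear form in `K[x₁,…,xₙ]` associated to a vector of `V` via a basis. -/
noncomputable def linearFormOf (b : Module.Basis (Fin n) K V) : V →ₗ[K] MvPolynomial (Fin n) K :=
  (Finsupp.linearCombination K fun j => (MvPolynomial.X j : MvPolynomial (Fin n) K)) ∘ₗ
    b.repr.toLinearMap

/-- The multiplication map `π : V^{⊗d} → S^d V`, `v₁ ⊗ ⋯ ⊗ v_d ↦ v₁⋯v_d`, where `S^d V` is
realised as the space of degree-`d` forms in `K[x₁,…,xₙ]` via the basis `b`. -/
noncomputable def tensorToPoly (b : Module.Basis (Fin n) K V) (d : ℕ) :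
    (⨂[K] _ : Fin d, V) →ₗ[K] MvPolynomial (Fin n) K :=
  PiTensorProduct.lift
    ((MultilinearMap.mkPiAlgebra K (Fin d) (MvPolynomial (Fin n) K)).compLinearMap
      (fun _ => linearFormOf K b))

/-- The symmetrisation map `ι : S^d V → V^{⊗d}`,
`v₁⋯v_d ↦ Σ_{σ ∈ S_d} v_{σ(1)} ⊗ ⋯ ⊗ v_{σ(d)}`, where `S^d V` is realised as the space of
degree-`d` forms in `K[x₁,…,xₙ]` via the basis `b`. -/
noncomputable def polyToTensor (b : Module.Basis (Fin n) K V) (d : ℕ) :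
    MvPolynomial (Fin n) K →ₗ[K] ⨂[K] _ : Fin d, V :=
  ∑ w : Fin d → Fin n,
    (∏ j : Fin n, Nat.factorial ((∑ i : Fin d, Finsupp.single (w i) 1 : Fin n →₀ ℕ) j)) •
      ((LinearMap.toSpanSingleton K _ (PiTensorProduct.tprod K fun i => b (w i))) ∘ₗ
        (MvPolynomial.lcoeff K (∑ i : Fin d, Finsupp.single (w i) 1)))

end PiIota

section Coords

variable (F : Type*) [Field F]

/-- The standard coordinate on `(Fⁿ)^{⊗d}` indexed by the word `w`, i.e. the coefficient
of the basis vector `e_{w 0} ⊗ ⋯ ⊗ e_{w (d-1)}`. -/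
noncomputable def stdCoord (d n : ℕ) (w : Fin d → Fin n) :
    (⨂[F] _ : Fin d, (Fin n → F)) →ₗ[F] F :=
  PiTensorProduct.lift
    ((MultilinearMap.mkPiAlgebra F (Fin d) F).compLinearMap
      (fun i => LinearMap.proj (w i)))

end Coords

/-- A decomposition of `f` as a sum of `r` products of pairs of homogeneous polynomials
of positive degree; witnesses "strength at most `r`". -/
def StrengthDecomp {K : Type*} [CommSemiring K] {σ : Type*}
    (f : MvPolynomial σ K) (r : ℕ) : Prop :=
  ∃ (a b : Fin r → MvPolynomial σ K) (da db : Fin r → ℕ),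
    (∀ i, 0 < da i ∧ 0 < db i ∧ (a i).IsHomogeneous (da i) ∧ (b i).IsHomogeneous (db i)) ∧
    f = ∑ i, a i * b i

/-- The strength of a polynomial: the minimal number of terms in a decomposition as a
sum of products of homogeneous polynomials of positive degree. -/
noncomputable def strength {K : Type*} [CommSemiring K] {σ : Type*}
    (f : MvPolynomial σ K) : ℕ :=
  sInf {r | StrengthDecomp f r}


/-! Write `f = ∑ₖ aₖ bₖ` with `aₖ`, `bₖ` homogeneous of positive degrees `eₖ`, `eₖ'`. The
symmetrisation satisfies a Leibniz rule `ι(pq) = ∑_{S ⊆ [d]} ι_S(p) ⊗ ι_{Sᶜ}(q)`, where `ι_S`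
symmetrises over the tensor positions in `S`; on monomials this amounts to counting the subsets
of positions on which a word has prescribed content. If `p` is homogeneous of degree `e` then
`ι_S(p) = 0` unless `|S| = e`, so `ι(aₖ bₖ)` is a sum of `binom(d, eₖ) ≤ binom(d, ⌊d/2⌋)` tensors
of partition rank one when `eₖ + eₖ' = d`, and vanishes otherwise. -/

section IsSumOf

variable {M : Type*} [AddCommMonoid M] (P : M → Prop)

def IsSumOf (r : ℕ) (t : M) : Prop :=
  ∃ g : Fin r → M, (∀ k, P (g k)) ∧ ∑ k, g k = t

variable {P}

theorem IsSumOf.zero : IsSumOf P 0 0 :=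
  ⟨Fin.elim0, fun k => k.elim0, Fin.sum_univ_zero _⟩

theorem IsSumOf.single {t : M} (ht : P t) : IsSumOf P 1 t :=
  ⟨fun _ => t, fun _ => ht, Fin.sum_univ_one _⟩

theorem IsSumOf.add {r s : ℕ} {t u : M} (ht : IsSumOf P r t) (hu : IsSumOf P s u) :
    IsSumOf P (r + s) (t + u) := by
  obtain ⟨g, hg, rfl⟩ := ht
  obtain ⟨g', hg', rfl⟩ := hu
  exact ⟨Fin.append g g', Fin.addCases (by simpa using hg) (by simpa using hg'),
    by simp [Fin.sum_univ_add]⟩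

theorem IsSumOf.finset_sum {ι : Type*} (A : Finset ι) {r : ι → ℕ} {t : ι → M}
    (h : ∀ i ∈ A, IsSumOf P (r i) (t i)) : IsSumOf P (∑ i ∈ A, r i) (∑ i ∈ A, t i) := by
  classical
  induction A using Finset.induction_on with
  | empty => exact .zero
  | insert a A ha ih =>
    rw [Finset.sum_insert ha, Finset.sum_insert ha]
    exact (h a (A.mem_insert_self a)).add (ih fun i hi => h i (Finset.mem_insert_of_mem hi))

theorem isSumOf_finset_sum {ι : Type*} (A : Finset ι) {t : ι → M} (h : ∀ i ∈ A, P (t i)) :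
    IsSumOf P A.card (∑ i ∈ A, t i) := by
  simpa using IsSumOf.finset_sum A fun i hi => IsSumOf.single (h i hi)

theorem isSumOf_zero (h0 : P 0) (r : ℕ) : IsSumOf P r 0 :=
  ⟨fun _ => 0, fun _ => h0, Finset.sum_const_zero⟩

theorem IsSumOf.mono (h0 : P 0) {r s : ℕ} {t : M} (ht : IsSumOf P r t) (hrs : r ≤ s) :
    IsSumOf P s t := by
  simpa [hrs] using ht.add (isSumOf_zero h0 (s - r))

end IsSumOf

section PartitionTerms

variable (F : Type*) [Field F] {d : ℕ} (W : Fin d → Type*)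
  [∀ i, AddCommGroup (W i)] [∀ i, Module F (W i)]

def IsPartitionTerm (t : ⨂[F] i, W i) : Prop :=
  ∃ I : Finset (Fin d), I.Nonempty ∧ I ≠ Finset.univ ∧
    ∃ (a : ⨂[F] i : {x // x ∈ I}, W i) (b : ⨂[F] i : {x // x ∉ I}, W i), partMul F W I a b = t

variable {F W}

theorem prkDecomp_iff_isSumOf {t : ⨂[F] i, W i} {r : ℕ} :
    PrkDecomp F W t r ↔ IsSumOf (IsPartitionTerm F W) r t := by
  constructor
  · rintro ⟨I, hI, a, b, rfl⟩
    exact ⟨_, fun k => ⟨I k, (hI k).1, (hI k).2, a k, b k, rfl⟩, rfl⟩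
  · rintro ⟨g, hg, rfl⟩
    choose I hI hI' a b hab using hg
    exact ⟨I, fun k => ⟨hI k, hI' k⟩, a, b, by simp only [hab]⟩

theorem prk_le_of_isSumOf {t : ⨂[F] i, W i} {r : ℕ} (h : IsSumOf (IsPartitionTerm F W) r t) :
    prk F W t ≤ r :=
  Nat.sInf_le (prkDecomp_iff_isSumOf.mpr h)

theorem isPartitionTerm_zero (hd : 2 ≤ d) : IsPartitionTerm F W 0 :=
  ⟨{⟨0, by omega⟩}, Finset.singleton_nonempty _,
    fun h => by have := congrArg Finset.card h; simp at this; omega, 0, 0, by simp⟩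

theorem partMul_tprod (I : Finset (Fin d)) (v : ∀ i : {x // x ∈ I}, W i)
    (w : ∀ i : {x // x ∉ I}, W i) :
    partMul F W I (tprod F v) (tprod F w) = tprod F (combineVec W I v w) := by
  simp [partMul, partMulOuter, partMulInner]

theorem combineVec_restrict (I : Finset (Fin d)) (v : ∀ i, W i) :
    combineVec W I (fun i => v i) (fun i => v i) = v := by
  funext i
  by_cases h : i ∈ I <;> simp [combineVec, h]

end PartitionTerms

section Strength

variable {R : Type*} [CommSemiring R] {σ : Type*}

def IsStrengthTerm (g : MvPolynomial σ R) : Prop :=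
  ∃ (a b : MvPolynomial σ R) (da db : ℕ),
    (0 < da ∧ 0 < db ∧ a.IsHomogeneous da ∧ b.IsHomogeneous db) ∧ a * b = g

theorem strengthDecomp_iff_isSumOf {f : MvPolynomial σ R} {r : ℕ} :
    StrengthDecomp f r ↔ IsSumOf IsStrengthTerm r f := by
  constructor
  · rintro ⟨a, b, da, db, h, rfl⟩
    exact ⟨_, fun k => ⟨a k, b k, da k, db k, h k, rfl⟩, rfl⟩
  · rintro ⟨g, hg, rfl⟩
    choose a b da db h hab using hg
    exact ⟨a, b, da, db, h, by simp only [hab]⟩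

theorem isStrengthTerm_monomial {m : σ →₀ ℕ} (hm : 2 ≤ m.degree) (c : R) :
    IsStrengthTerm (MvPolynomial.monomial m c) := by
  obtain ⟨j, hj⟩ : ∃ j, m j ≠ 0 := by
    by_contra! h
    simp [show m = 0 from Finsupp.ext h] at hm
  have hle : Finsupp.single j 1 ≤ m := Finsupp.single_le_iff.mpr (Nat.one_le_iff_ne_zero.mpr hj)
  have hdeg : (m - Finsupp.single j 1).degree = m.degree - 1 := by
    have := congrArg Finsupp.degree (add_tsub_cancel_of_le hle)
    rw [map_add, Finsupp.degree_single] at this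
    omega
  refine ⟨MvPolynomial.X j, MvPolynomial.monomial (m - Finsupp.single j 1) c, 1, m.degree - 1,
    ⟨one_pos, by omega, MvPolynomial.isHomogeneous_X R j,
      MvPolynomial.isHomogeneous_monomial _ hdeg⟩, ?_⟩
  rw [MvPolynomial.X, MvPolynomial.monomial_mul, one_mul, add_tsub_cancel_of_le hle]

theorem isSumOf_isStrengthTerm_of_isHomogeneous {f : MvPolynomial σ R} {d : ℕ} (hd : 2 ≤ d)
    (hf : f.IsHomogeneous d) : IsSumOf IsStrengthTerm f.support.card f := by
  have hdeg : ∀ m ∈ f.support, 2 ≤ m.degree := fun m hm => by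
    rw [Finsupp.degree_eq_weight_one]; exact hf (MvPolynomial.mem_support_iff.mp hm) ▸ hd
  simpa only [f.support_sum_monomial_coeff] using
    isSumOf_finset_sum f.support fun m hm => isStrengthTerm_monomial (hdeg m hm) (f.coeff m)

end Strength

section WordContent

open Finset

variable {n : ℕ}

/-- The exponent vector of the monomial `x_{u i₁} ⋯ x_{u iₖ}`. -/
noncomputable def wordContent {ι : Type*} [Fintype ι] (u : ι → Fin n) : Fin n →₀ ℕ :=
  ∑ i, Finsupp.single (u i) 1

theorem degree_wordContent {ι : Type*} [Fintype ι] (u : ι → Fin n) :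
    (wordContent u).degree = Fintype.card ι := by
  simp only [wordContent, map_sum, Finsupp.degree_single, Finset.sum_const, smul_eq_mul, mul_one,
    Finset.card_univ]

variable {d : ℕ}

theorem wordContent_restrict (S : Finset (Fin d)) (w : Fin d → Fin n) :
    wordContent (fun i : {x // x ∈ S} => w i) = ∑ i ∈ S, Finsupp.single (w i) 1 :=
  S.sum_coe_sort fun i => Finsupp.single (w i) 1

theorem wordContent_restrict_add_restrict_compl (S : Finset (Fin d)) (w : Fin d → Fin n) :
    wordContent (fun i : {x // x ∈ S} => w i) + wordContent (fun i : {x // x ∉ S} => w i) =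
      wordContent w := by
  rw [wordContent_restrict, wordContent, wordContent,
    ← Finset.sum_subtype Sᶜ (fun _ => Finset.mem_compl) fun i => Finsupp.single (w i) 1,
    Finset.sum_add_sum_compl]

theorem sum_single_apply (S : Finset (Fin d)) (w : Fin d → Fin n) (j : Fin n) :
    (∑ i ∈ S, Finsupp.single (w i) 1) j = #{i ∈ S | w i = j} := by
  simp only [Finsupp.finsetSum_apply, Finsupp.single_apply, card_filter]

theorem card_filter_sum_single_eq (w : Fin d → Fin n) (α : Fin n →₀ ℕ) :
    #{S : Finset (Fin d) | ∑ i ∈ S, Finsupp.single (w i) 1 = α} =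
      ∏ j, (wordContent w j).choose (α j) := by
  -- `S` is determined by its traces on the fibres of `w`, which can be chosen independently.
  set fiber : Fin n → Finset (Fin d) := fun j => {i | w i = j}
  have hglue : ∀ T : Fin n → Finset (Fin d), (∀ j, T j ⊆ fiber j) →
      ∀ j, {i ∈ ({i | i ∈ T (w i)} : Finset (Fin d)) | w i = j} = T j := by
    intro T hT j
    ext i
    simp only [mem_filter, mem_univ, true_and]
    exact ⟨fun ⟨hi, hij⟩ => hij ▸ hi, fun hi => by
      have hij : w i = j := by simpa [fiber] using hT j hi
      exact ⟨hij ▸ hi, hij⟩⟩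
  calc _ = #(Fintype.piFinset fun j => powersetCard (α j) (fiber j)) := by
        refine card_bij' (fun S _ j => {i ∈ S | w i = j})
          (fun T _ => ({i | i ∈ T (w i)} : Finset (Fin d))) ?_ ?_ ?_ ?_
        · intro S hS
          simp only [mem_filter, mem_univ, true_and] at hS
          simp only [Fintype.mem_piFinset, mem_powersetCard]
          intro j
          refine ⟨fun i => by simp [fiber], ?_⟩
          rw [← sum_single_apply, hS]
        · intro T hT
          simp only [Fintype.mem_piFinset, mem_powersetCard] at hT
          simp only [mem_filter, mem_univ, true_and]
          ext j
          rw [sum_single_apply, hglue T (fun j => (hT j).1) j, (hT j).2]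
        · intro S _
          ext i
          simp
        · intro T hT
          simp only [Fintype.mem_piFinset, mem_powersetCard] at hT
          exact funext (hglue T fun j => (hT j).1)
    _ = _ := by
        rw [Fintype.card_piFinset]
        refine prod_congr rfl fun j _ => ?_
        rw [card_powersetCard, wordContent, ← sum_single_apply]

open Nat in
theorem card_filter_wordContent_mul_factorial (w : Fin d → Fin n) (α β : Fin n →₀ ℕ) :
    #{S : Finset (Fin d) | wordContent (fun i : {x // x ∈ S} => w i) = α ∧
        wordContent (fun i : {x // x ∉ S} => w i) = β} * ((∏ j, (α j)!) * ∏ j, (β j)!) =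
      if wordContent w = α + β then ∏ j, ((α + β) j)! else 0 := by
  split_ifs with h
  · have hsplit : ∀ S : Finset (Fin d), (wordContent (fun i : {x // x ∈ S} => w i) = α ∧
        wordContent (fun i : {x // x ∉ S} => w i) = β) ↔ ∑ i ∈ S, Finsupp.single (w i) 1 = α := by
      intro S
      rw [← wordContent_restrict]
      refine ⟨And.left, fun hα => ⟨hα, add_left_cancel (a := α) ?_⟩⟩
      rw [← h, ← wordContent_restrict_add_restrict_compl S, hα]
    rw [filter_congr fun S _ => hsplit S, card_filter_sum_single_eq, h, ← prod_mul_distrib,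
      ← prod_mul_distrib]
    refine prod_congr rfl fun j _ => ?_
    rw [Finsupp.add_apply, add_comm (α j), ← add_choose_mul_factorial_mul_factorial (β j) (α j)]
    ring
  · rw [Finset.card_eq_zero.mpr, zero_mul]
    exact filter_false_of_mem fun S _ ⟨hα, hβ⟩ =>
      h (by rw [← wordContent_restrict_add_restrict_compl S, hα, hβ])

end WordContent

section Symmetrization

open MvPolynomial Finset Nat

variable {K : Type*} [Field K] {V : Type*} [AddCommGroup V] [Module K V] {n : ℕ}

variable (K) in
noncomputable def symmTensor (b : Module.Basis (Fin n) K V) (ι : Type*) [Fintype ι]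
    [DecidableEq ι] : MvPolynomial (Fin n) K →ₗ[K] ⨂[K] _ : ι, V :=
  ∑ u : ι → Fin n, (∏ j, (wordContent u j)!) •
    ((LinearMap.toSpanSingleton K _ (tprod K fun i => b (u i))) ∘ₗ lcoeff K (wordContent u))

theorem polyToTensor_eq_symmTensor (b : Module.Basis (Fin n) K V) (d : ℕ) :
    polyToTensor K b d = symmTensor K b (Fin d) :=
  rfl

variable (b : Module.Basis (Fin n) K V) {ι : Type*} [Fintype ι] [DecidableEq ι]

theorem symmTensor_apply (p : MvPolynomial (Fin n) K) :
    symmTensor K b ι p = ∑ u : ι → Fin n,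
      ((∏ j, (wordContent u j)! : ℕ) * coeff (wordContent u) p : K) • tprod K fun i => b (u i) := by
  rw [symmTensor, LinearMap.sum_apply]
  refine sum_congr rfl fun u _ => ?_
  change (∏ j, (wordContent u j)!) • LinearMap.toSpanSingleton K _ (tprod K fun i => b (u i))
    (lcoeff K (wordContent u) p) = _
  rw [lcoeff_apply, LinearMap.toSpanSingleton_apply, mul_smul, Nat.cast_smul_eq_nsmul]

theorem symmTensor_eq_zero_of_isHomogeneous {p : MvPolynomial (Fin n) K} {e : ℕ}
    (hp : p.IsHomogeneous e) (he : Fintype.card ι ≠ e) : symmTensor K b ι p = 0 := by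
  rw [symmTensor_apply]
  refine sum_eq_zero fun u _ => ?_
  rw [hp.coeff_eq_zero (by rwa [degree_wordContent]), mul_zero, zero_smul]

theorem symmTensor_monomial (α : Fin n →₀ ℕ) (c : K) :
    symmTensor K b ι (monomial α c) = ∑ u : ι → Fin n,
      (if wordContent u = α then (∏ j, (α j)! : ℕ) * c else 0 : K) • tprod K fun i => b (u i) := by
  rw [symmTensor_apply]
  refine sum_congr rfl fun u _ => ?_
  by_cases h : wordContent u = α <;> simp [coeff_monomial, h, eq_comm (a := α)]

variable {d : ℕ}

theorem partMul_symmTensor_monomial (S : Finset (Fin d)) (α β : Fin n →₀ ℕ) (c c' : K) :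
    partMul K (fun _ => V) S (symmTensor K b _ (monomial α c))
        (symmTensor K b _ (monomial β c')) =
      ∑ w : Fin d → Fin n,
        (if wordContent (fun i : {x // x ∈ S} => w i) = α ∧
            wordContent (fun i : {x // x ∉ S} => w i) = β
          then (((∏ j, (α j)!) * ∏ j, (β j)! : ℕ) : K) * (c * c') else 0) •
          tprod K fun i => b (w i) := by
  rw [symmTensor_monomial, symmTensor_monomial]
  simp only [map_sum, map_smul, LinearMap.sum_apply, LinearMap.smul_apply, smul_sum,
    partMul_tprod, smul_smul]
  rw [sum_comm, ← Fintype.sum_prod_type']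
  refine (Fintype.sum_equiv (Equiv.piEquivPiSubtypeProd (· ∈ S) fun _ => Fin n) _ _
    fun w => ?_).symm
  simp only [Equiv.piEquivPiSubtypeProd_apply, ite_zero_mul_ite_zero]
  rw [combineVec_restrict S fun i => b (w i)]
  simp only [and_comm (a := wordContent _ = β)]
  congr 1
  split_ifs <;> push_cast <;> ring

theorem polyToTensor_monomial_mul_monomial (α β : Fin n →₀ ℕ) (c c' : K) :
    polyToTensor K b d (monomial α c * monomial β c') = ∑ S : Finset (Fin d),
      partMul K (fun _ => V) S (symmTensor K b _ (monomial α c))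
        (symmTensor K b _ (monomial β c')) := by
  simp only [partMul_symmTensor_monomial, monomial_mul, polyToTensor_eq_symmTensor]
  rw [symmTensor_monomial, sum_comm]
  refine sum_congr rfl fun w _ => ?_
  rw [← sum_smul]
  congr 1
  rw [sum_ite, sum_const_zero, add_zero, sum_const, nsmul_eq_mul, ← mul_assoc _ _ (c * c'),
    ← Nat.cast_mul, card_filter_wordContent_mul_factorial]
  split_ifs <;> simp

theorem polyToTensor_mul (p q : MvPolynomial (Fin n) K) :
    polyToTensor K b d (p * q) = ∑ S : Finset (Fin d),
      partMul K (fun _ => V) S (symmTensor K b _ p) (symmTensor K b _ q) := by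
  induction p using MvPolynomial.induction_on' with
  | monomial α c =>
    induction q using MvPolynomial.induction_on' with
    | monomial β c' => exact polyToTensor_monomial_mul_monomial b α β c c'
    | add q q' hq hq' => simp only [mul_add, map_add, hq, hq', sum_add_distrib]
  | add p p' hp hp' => simp only [add_mul, map_add, LinearMap.add_apply, hp, hp', sum_add_distrib]

theorem isSumOf_polyToTensor_mul {p : MvPolynomial (Fin n) K} {e : ℕ} (hp : p.IsHomogeneous e)
    (he : 0 < e) (hed : e < d) (q : MvPolynomial (Fin n) K) :
    IsSumOf (IsPartitionTerm K fun _ : Fin d => V) (d.choose e) (polyToTensor K b d (p * q)) := by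
  have hvanish : ∀ S ∈ (univ : Finset (Finset (Fin d))), S ∉ powersetCard e univ →
      partMul K (fun _ => V) S (symmTensor K b _ p) (symmTensor K b _ q) = 0 := by
    intro S _ hS
    rw [symmTensor_eq_zero_of_isHomogeneous b hp (by simpa using hS), map_zero,
      LinearMap.zero_apply]
  rw [polyToTensor_mul, ← sum_subset (subset_univ _) hvanish]
  have hterm : ∀ S ∈ powersetCard e (univ : Finset (Fin d)), IsPartitionTerm K (fun _ => V)
      (partMul K (fun _ => V) S (symmTensor K b _ p) (symmTensor K b _ q)) := by
    intro S hS
    have hS : S.card = e := (mem_powersetCard.mp hS).2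
    exact ⟨S, card_pos.mp (hS ▸ he), fun h => by simp [h] at hS; omega, _, _, rfl⟩
  simpa using isSumOf_finset_sum _ hterm

theorem isSumOf_polyToTensor_of_isStrengthTerm (hd : 2 ≤ d) {g : MvPolynomial (Fin n) K}
    (hg : IsStrengthTerm g) :
    IsSumOf (IsPartitionTerm K fun _ : Fin d => V) (d.choose (d / 2)) (polyToTensor K b d g) := by
  obtain ⟨p, q, e, e', ⟨he, he', hp, hq⟩, rfl⟩ := hg
  by_cases hee : e + e' = d
  · exact (isSumOf_polyToTensor_mul b hp he (by omega) q).mono (isPartitionTerm_zero hd)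
      (choose_le_middle e d)
  · rw [polyToTensor_eq_symmTensor, symmTensor_eq_zero_of_isHomogeneous b (hp.mul hq)
      (by simpa [eq_comm] using hee)]
    exact isSumOf_zero (isPartitionTerm_zero hd) _

end Symmetrization

/-- Let `K` be a field, `V` a finite-dimensional `K`-vector space (with a
basis `b` indexed by `Fin n`), `d ≥ 2`, and `f ∈ S^d V`. Then
`prk_K(ι(f)) ≤ binom(d, ⌊d/2⌋) · s_K(f)`, where `ι : S^d V → V^{⊗d}` is the
symmetrisation map. -/
theorem prk_polyToTensor_le_choose_mul_strength (K : Type*) [Field K] (V : Type*)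
    [AddCommGroup V] [Module K V] (n d : ℕ) (hd : 2 ≤ d) (b : Module.Basis (Fin n) K V)
    (f : MvPolynomial (Fin n) K) (hf : f.IsHomogeneous d) :
    prk K (fun _ : Fin d => V) (polyToTensor K b d f) ≤
      Nat.choose d (d / 2) * strength f := by
  have hopt : StrengthDecomp f (strength f) := Nat.sInf_mem (s := {r | StrengthDecomp f r})
    ⟨_, strengthDecomp_iff_isSumOf.mpr (isSumOf_isStrengthTerm_of_isHomogeneous hd hf)⟩
  obtain ⟨g, hg, hsum⟩ := strengthDecomp_iff_isSumOf.mp hopt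
  have hprk := IsSumOf.finset_sum Finset.univ fun k _ =>
    isSumOf_polyToTensor_of_isStrengthTerm (V := V) b hd (hg k)
  rw [← map_sum, hsum, Finset.sum_const, Finset.card_univ, Fintype.card_fin, smul_eq_mul,
    mul_comm] at hprk
  exact prk_le_of_isSumOf hprk
end

section
/- Let K be a field, V₁,…,V_d finite-dimensional K-vector spaces, m ≥ 1, and t̲ ∈ (V₁ ⊗ ⋯ ⊗ V_d)^m. Let L be a field extension of K with e := [L:K] < ∞. Then the collective partition rank satisfies prk_K(t̲) ≤ e · prk_L(t̲). -/
set_option linter.unusedSectionVars false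

open PiTensorProduct
open scoped TensorProduct

section AuxPartMul

variable (F : Type*) [Field F] {d : ℕ} (W : Fin d → Type*)
  [∀ i, AddCommGroup (W i)] [∀ i, Module F (W i)]

theorem partMul_tprod_tprod (I : Finset (Fin d))
    (v : ∀ i : {x : Fin d // x ∈ I}, W i) (w : ∀ i : {x : Fin d // x ∉ I}, W i) :
    partMul F W I (tprod F v) (tprod F w) = tprod F (combineVec W I v w) := by
  simp [partMul, partMulOuter, partMulInner, lift.tprod]

theorem prkDecomp_zero : PrkDecomp F W 0 0 :=
  ⟨Fin.elim0, fun k => k.elim0, fun k => k.elim0, fun k => k.elim0, by simp⟩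

theorem PrkDecomp.add {s t : ⨂[F] i, W i} {r₁ r₂ : ℕ} (hs : PrkDecomp F W s r₁)
    (ht : PrkDecomp F W t r₂) : PrkDecomp F W (s + t) (r₁ + r₂) := by
  obtain ⟨I₁, hI₁, a₁, b₁, rfl⟩ := hs
  obtain ⟨I₂, hI₂, a₂, b₂, rfl⟩ := ht
  have hprop : ∀ q : Fin r₁ ⊕ Fin r₂,
      (Sum.elim I₁ I₂ q).Nonempty ∧ Sum.elim I₁ I₂ q ≠ Finset.univ := by
    rintro (j | j)
    exacts [hI₁ j, hI₂ j]
  refine ⟨fun k => Sum.elim I₁ I₂ (finSumFinEquiv.symm k),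
    fun k => hprop _,
    fun k => Sum.rec (motive := fun q => ⨂[F] i : {x : Fin d // x ∈ Sum.elim I₁ I₂ q}, W i)
      a₁ a₂ (finSumFinEquiv.symm k),
    fun k => Sum.rec (motive := fun q => ⨂[F] i : {x : Fin d // x ∉ Sum.elim I₁ I₂ q}, W i)
      b₁ b₂ (finSumFinEquiv.symm k), ?_⟩
  have := Equiv.sum_comp (finSumFinEquiv.symm : Fin (r₁ + r₂) ≃ (Fin r₁ ⊕ Fin r₂))
    (fun q => partMul F W (Sum.elim I₁ I₂ q)
      (Sum.rec (motive := fun q => ⨂[F] i : {x : Fin d // x ∈ Sum.elim I₁ I₂ q}, W i) a₁ a₂ q)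
      (Sum.rec (motive := fun q => ⨂[F] i : {x : Fin d // x ∉ Sum.elim I₁ I₂ q}, W i) b₁ b₂ q))
  rw [this, Fintype.sum_sum_type]
  rfl

theorem PrkDecomp.smul {s : ⨂[F] i, W i} {r : ℕ} (c : F) (h : PrkDecomp F W s r) :
    PrkDecomp F W (c • s) r := by
  obtain ⟨I, hI, a, b, rfl⟩ := h
  refine ⟨I, hI, fun k => c • a k, b, ?_⟩
  rw [Finset.smul_sum]
  refine Finset.sum_congr rfl fun k _ => ?_
  rw [map_smul, LinearMap.smul_apply]

theorem prkDecomp_tprod (hd : 2 ≤ d) (x : ∀ i, W i) : PrkDecomp F W (tprod F x) 1 := by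
  classical
  have h0 : (0 : ℕ) < d := by omega
  have h1 : (1 : ℕ) < d := by omega
  set I : Finset (Fin d) := {⟨0, h0⟩} with hIdef
  refine ⟨fun _ => I, fun _ => ⟨⟨⟨0, h0⟩, by simp [hIdef]⟩, ?_⟩,
    fun _ => tprod F fun i : {y : Fin d // y ∈ I} => x i,
    fun _ => tprod F fun i : {y : Fin d // y ∉ I} => x i, ?_⟩
  · intro h
    have h' : I = Finset.univ := h
    have : (⟨1, h1⟩ : Fin d) ∈ I := by rw [h']; exact Finset.mem_univ _
    simp [hIdef, Fin.ext_iff] at this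
  · rw [Fin.sum_univ_one, partMul_tprod_tprod]
    congr 1
    funext i
    by_cases h : i ∈ I <;> simp [combineVec, h]

theorem exists_prkDecomp (hd : 2 ≤ d) (s : ⨂[F] i, W i) : ∃ r, PrkDecomp F W s r := by
  have hs : s ∈ Submodule.span F (Set.range (tprod F (s := W))) := by
    rw [PiTensorProduct.span_tprod_eq_top]; trivial
  induction hs using Submodule.span_induction with
  | mem y hy => obtain ⟨z, rfl⟩ := hy; exact ⟨1, prkDecomp_tprod F W hd z⟩
  | zero => exact ⟨0, prkDecomp_zero F W⟩
  | add y z _ _ hy hz =>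
      obtain ⟨r₁, h₁⟩ := hy
      obtain ⟨r₂, h₂⟩ := hz
      exact ⟨r₁ + r₂, h₁.add F W h₂⟩
  | smul c y _ hy =>
      obtain ⟨r, h⟩ := hy
      exact ⟨r, h.smul F W c⟩

theorem prkDecomp_doubleSum {e r : ℕ} (I : Fin r → Finset (Fin d))
    (hI : ∀ k, (I k).Nonempty ∧ I k ≠ Finset.univ)
    (A : ∀ k, Fin e → ⨂[F] i : {x : Fin d // x ∈ I k}, W i)
    (B : ∀ k, Fin e → ⨂[F] i : {x : Fin d // x ∉ I k}, W i) :
    PrkDecomp F W (∑ k, ∑ j, partMul F W (I k) (A k j) (B k j)) (e * r) := by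
  refine ⟨fun q => I (finProdFinEquiv.symm q).2, fun q => hI _,
    fun q => A (finProdFinEquiv.symm q).2 (finProdFinEquiv.symm q).1,
    fun q => B (finProdFinEquiv.symm q).2 (finProdFinEquiv.symm q).1, ?_⟩
  have := Equiv.sum_comp (finProdFinEquiv.symm : Fin (e * r) ≃ (Fin e × Fin r))
    (fun p : Fin e × Fin r => partMul F W (I p.2) (A p.2 p.1) (B p.2 p.1))
  rw [this, Fintype.sum_prod_type, Finset.sum_comm]

end AuxPartMul

section Psi

variable (K L : Type*) [Field K] [Field L] [Algebra K L]
variable {ι : Type*} [Fintype ι] [DecidableEq ι] (V : ι → Type*)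
  [∀ i, AddCommGroup (V i)] [∀ i, Module K (V i)] [∀ i, FiniteDimensional K (V i)]

/-- The collecting-scalars multilinear map `Π (L ⊗ Vᵢ) → L ⊗ (⨂ Vᵢ)`. -/
noncomputable def bigPhiMl : MultilinearMap L (fun i => L ⊗[K] V i) (L ⊗[K] (⨂[K] i, V i)) :=
  ∑ w : ∀ i, Fin (Module.finrank K (V i)),
    (LinearMap.toSpanSingleton L (L ⊗[K] (⨂[K] i, V i))
        ((1 : L) ⊗ₜ tprod K fun i => Module.finBasis K (V i) (w i))).compMultilinearMap
      ((MultilinearMap.mkPiAlgebra L ι L).compLinearMap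
        fun i => ((Module.finBasis K (V i)).baseChange L).coord (w i))

theorem bigPhiMl_tprod (μ : ι → L) (v : ∀ i, V i) :
    bigPhiMl K L V (fun i => μ i ⊗ₜ v i) = (∏ i, μ i) ⊗ₜ tprod K v := by
  classical
  have hv : tprod K v =
      ∑ w : ∀ i, Fin (Module.finrank K (V i)),
        (∏ i, (Module.finBasis K (V i)).repr (v i) (w i)) •
          tprod K fun i => Module.finBasis K (V i) (w i) := by
    have hrepr : v = fun i => ∑ p, (Module.finBasis K (V i)).repr (v i) p •
        Module.finBasis K (V i) p :=
      funext fun i => ((Module.finBasis K (V i)).sum_repr (v i)).symm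
    conv_lhs => rw [hrepr]
    rw [MultilinearMap.map_sum]
    exact Finset.sum_congr rfl fun w _ => MultilinearMap.map_smul_univ _ _ _
  simp only [bigPhiMl, MultilinearMap.sum_apply, LinearMap.compMultilinearMap_apply,
    MultilinearMap.compLinearMap_apply, MultilinearMap.mkPiAlgebra_apply,
    LinearMap.toSpanSingleton_apply, Module.Basis.coord_apply, Module.Basis.baseChange_repr_tmul]
  have hterm : ∀ w : ∀ i, Fin (Module.finrank K (V i)),
      (∏ i, (Module.finBasis K (V i)).repr (v i) (w i) • μ i) •
          ((1 : L) ⊗ₜ[K] tprod K fun i => Module.finBasis K (V i) (w i)) =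
      (∏ i, μ i) • ((1 : L) ⊗ₜ[K]
        ((∏ i, (Module.finBasis K (V i)).repr (v i) (w i)) •
          tprod K fun i => Module.finBasis K (V i) (w i))) := by
    intro w
    rw [show (∏ i, (Module.finBasis K (V i)).repr (v i) (w i) • μ i) =
        (∏ i, μ i) * algebraMap K L (∏ i, (Module.finBasis K (V i)).repr (v i) (w i)) by
      rw [map_prod, mul_comm, ← Finset.prod_mul_distrib]
      exact Finset.prod_congr rfl fun i _ => Algebra.smul_def _ _]
    rw [mul_smul, algebraMap_smul, TensorProduct.tmul_smul]
  rw [Finset.sum_congr rfl fun w _ => hterm w, ← Finset.smul_sum, ← TensorProduct.tmul_sum,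
    ← hv, TensorProduct.smul_tmul', smul_eq_mul, mul_one]

/-- The descent map `⨂[L] (L ⊗ Vᵢ) → ⨂[K] Vᵢ` induced by a `K`-linear form `φ` on `L`. -/
noncomputable def psiMap (φ : L →ₗ[K] K) : (⨂[L] i, L ⊗[K] V i) →ₗ[K] ⨂[K] i, V i :=
  (TensorProduct.lid K _).toLinearMap ∘ₗ (LinearMap.rTensor _ φ) ∘ₗ
    ((PiTensorProduct.lift (bigPhiMl K L V)).restrictScalars K)

theorem psiMap_tprod (φ : L →ₗ[K] K) (μ : ι → L) (v : ∀ i, V i) :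
    psiMap K L V φ (tprod L fun i => μ i ⊗ₜ v i) = φ (∏ i, μ i) • tprod K v := by
  simp [psiMap, lift.tprod, bigPhiMl_tprod, TensorProduct.lid_tmul]

theorem mem_span_pure [Nonempty ι] (x : ⨂[L] i, L ⊗[K] V i) :
    x ∈ Submodule.span K
      {y : ⨂[L] i, L ⊗[K] V i |
        ∃ (μ : ι → L) (v : ∀ i, V i), y = PiTensorProduct.tprod L fun i => μ i ⊗ₜ v i} := by
  classical
  set S : Set (⨂[L] i, L ⊗[K] V i) :=
    {y | ∃ (μ : ι → L) (v : ∀ i, V i), y = PiTensorProduct.tprod L fun i => μ i ⊗ₜ v i} with hS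
  have hpure : ∀ z : ∀ i, L ⊗[K] V i, tprod L z ∈ Submodule.span K S := by
    intro z
    have h := fun i => TensorProduct.exists_finset (R := K) (z i)
    choose s hs using h
    have hz : z = fun i => ∑ p ∈ s i, p.1 ⊗ₜ[K] p.2 := funext hs
    rw [hz, MultilinearMap.map_sum_finset]
    refine Submodule.sum_mem _ fun r _ => Submodule.subset_span ?_
    exact ⟨fun i => (r i).1, fun i => (r i).2, rfl⟩
  have hsmul : ∀ (lam : L) (y), y ∈ Submodule.span K S → lam • y ∈ Submodule.span K S := by
    intro lam y hy
    obtain ⟨i₀⟩ := ‹Nonempty ι›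
    induction hy using Submodule.span_induction with
    | mem y hy =>
        obtain ⟨μ, v, rfl⟩ := hy
        have h1 : lam • (tprod L fun i => μ i ⊗ₜ[K] v i) =
            tprod L (Function.update (fun i => μ i ⊗ₜ[K] v i) i₀
              (lam • (μ i₀ ⊗ₜ[K] v i₀))) := by
          rw [MultilinearMap.map_update_smul, Function.update_eq_self]
        have h2 : Function.update (fun i => μ i ⊗ₜ[K] v i) i₀ (lam • (μ i₀ ⊗ₜ[K] v i₀)) =
            fun i => Function.update μ i₀ (lam * μ i₀) i ⊗ₜ[K] v i := by
          funext i
          rcases eq_or_ne i i₀ with rfl | hi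
          · simp [TensorProduct.smul_tmul', smul_eq_mul]
          · simp [Function.update_of_ne hi]
        rw [h1, h2]
        exact Submodule.subset_span ⟨_, _, rfl⟩
    | zero => simp
    | add u w _ _ hu hw => rw [smul_add]; exact Submodule.add_mem _ hu hw
    | smul k u _ hu => rw [smul_comm]; exact Submodule.smul_mem _ _ hu
  have hx : x ∈ Submodule.span L (Set.range (tprod L (s := fun i => L ⊗[K] V i))) := by
    rw [PiTensorProduct.span_tprod_eq_top]; trivial
  induction hx using Submodule.span_induction with
  | mem y hy => obtain ⟨z, rfl⟩ := hy; exact hpure z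
  | zero => exact Submodule.zero_mem _
  | add u w _ _ hu hw => exact Submodule.add_mem _ hu hw
  | smul lam y _ hy => exact hsmul lam y hy

end Psi

section PsiPartMul

variable (K L : Type*) [Field K] [Field L] [Algebra K L] [FiniteDimensional K L]
variable {d : ℕ} (V : Fin d → Type*) [∀ i, AddCommGroup (V i)] [∀ i, Module K (V i)]
  [∀ i, FiniteDimensional K (V i)]

theorem combineVec_tmul (I : Finset (Fin d)) (μ : ∀ _ : {x : Fin d // x ∈ I}, L)
    (v : ∀ i : {x : Fin d // x ∈ I}, V i) (ν : ∀ _ : {x : Fin d // x ∉ I}, L)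
    (w : ∀ i : {x : Fin d // x ∉ I}, V i) :
    combineVec (fun i => L ⊗[K] V i) I (fun i => μ i ⊗ₜ v i) (fun i => ν i ⊗ₜ w i) =
      fun i => (if h : i ∈ I then μ ⟨i, h⟩ else ν ⟨i, h⟩) ⊗ₜ combineVec V I v w i := by
  funext i
  by_cases h : i ∈ I <;> simp [combineVec, h]

theorem key_scalar (φ : L →ₗ[K] K) (α β : L) :
    φ (α * β) = ∑ j, (Module.finBasis K L).repr α j * φ (Module.finBasis K L j * β) := by
  conv_lhs => rw [← Module.Basis.sum_repr (Module.finBasis K L) α]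
  rw [Finset.sum_mul, map_sum]
  exact Finset.sum_congr rfl fun j _ => by rw [smul_mul_assoc, map_smul, smul_eq_mul]

theorem my_prod_dite {M : Type*} [CommMonoid M] (I : Finset (Fin d))
    (μ : {x : Fin d // x ∈ I} → M) (ν : {x : Fin d // x ∉ I} → M) :
    (∏ i : Fin d, if h : i ∈ I then μ ⟨i, h⟩ else ν ⟨i, h⟩) = (∏ i, μ i) * ∏ i, ν i := by
  classical
  rw [Fintype.prod_dite]
  congr 1
  exact Finset.prod_congr (by congr!) fun x _ => congrArg μ (Subtype.coe_eta x x.2)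

theorem psiMap_partMul (I : Finset (Fin d)) (hI : I.Nonempty) (hIu : I ≠ Finset.univ)
    (φ : L →ₗ[K] K) (a : ⨂[L] i : {x : Fin d // x ∈ I}, L ⊗[K] V i)
    (b : ⨂[L] i : {x : Fin d // x ∉ I}, L ⊗[K] V i) :
    psiMap K L V φ (partMul L (fun i => L ⊗[K] V i) I a b) =
      ∑ j, partMul K V I
        (psiMap K L (fun i : {x : Fin d // x ∈ I} => V i)
          ((Module.finBasis K L).coord j) a)
        (psiMap K L (fun i : {x : Fin d // x ∉ I} => V i)
          (φ ∘ₗ LinearMap.mulLeft K (Module.finBasis K L j)) b) := by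
  classical
  have hne1 : Nonempty {x : Fin d // x ∈ I} := ⟨⟨hI.choose, hI.choose_spec⟩⟩
  have hne2 : Nonempty {x : Fin d // x ∉ I} := by
    by_contra hcon
    push_neg at hcon
    exact hIu (Finset.eq_univ_iff_forall.mpr fun x => by
      by_contra hx; exact hcon.false ⟨x, hx⟩)
  induction mem_span_pure K L (fun i : {x : Fin d // x ∈ I} => V i) a
      using Submodule.span_induction with
  | mem a ha =>
    obtain ⟨μ, v, rfl⟩ := ha
    induction mem_span_pure K L (fun i : {x : Fin d // x ∉ I} => V i) b
        using Submodule.span_induction with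
    | mem b hb =>
      obtain ⟨ν, w, rfl⟩ := hb
      rw [partMul_tprod_tprod, combineVec_tmul, psiMap_tprod]
      simp only [psiMap_tprod, map_smul, LinearMap.smul_apply, partMul_tprod_tprod,
        LinearMap.coe_comp, Function.comp_apply, LinearMap.mulLeft_apply,
        Module.Basis.coord_apply, smul_smul]
      rw [my_prod_dite, key_scalar K L φ, ← Finset.sum_smul]
      congr 1
      refine Finset.sum_congr rfl fun j _ => ?_
      exact mul_comm (((Module.finBasis K L).repr (∏ i, μ i)) j)
        (φ (Module.finBasis K L j * ∏ i, ν i))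
    | zero =>
      simp
    | add b₁ b₂ _ _ h₁ h₂ =>
      simp only [map_add, LinearMap.add_apply] at h₁ h₂ ⊢
      rw [h₁, h₂, ← Finset.sum_add_distrib]
    | smul k bb _ h =>
      simp only [LinearMap.map_smul_of_tower, LinearMap.smul_apply, map_smul] at h ⊢
      rw [h, Finset.smul_sum]
  | zero =>
    simp
  | add a₁ a₂ _ _ h₁ h₂ =>
    simp only [map_add, LinearMap.add_apply] at h₁ h₂ ⊢
    rw [h₁, h₂, ← Finset.sum_add_distrib]
  | smul k aa _ h =>
    simp only [LinearMap.map_smul_of_tower, LinearMap.smul_apply, map_smul] at h ⊢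
    rw [h, Finset.smul_sum]

theorem psiMap_smul_baseChange (hd : 0 < d) (φ : L →ₗ[K] K) (c : L) (t : ⨂[K] i, V i) :
    psiMap K L V φ (c • tensorBaseChange K L V t) = φ c • t := by
  classical
  have hmem : t ∈ Submodule.span K (Set.range (tprod K (s := V))) := by
    rw [PiTensorProduct.span_tprod_eq_top]; trivial
  induction hmem using Submodule.span_induction with
  | mem y hy =>
    obtain ⟨x, rfl⟩ := hy
    have h1 : tensorBaseChange K L V (tprod K x) = PiTensorProduct.tprod L fun i => (1 : L) ⊗ₜ x i := by
      simp [tensorBaseChange, lift.tprod]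
    set i₀ : Fin d := ⟨0, hd⟩ with hi₀
    have h3 : (fun i => (Function.update (fun _ : Fin d => (1 : L)) i₀ c) i ⊗ₜ[K] x i) =
        Function.update (fun i => (1 : L) ⊗ₜ[K] x i) i₀ (c • ((1 : L) ⊗ₜ[K] x i₀)) := by
      funext i
      rcases eq_or_ne i i₀ with rfl | hi
      · simp [TensorProduct.smul_tmul', smul_eq_mul]
      · simp [Function.update_of_ne hi]
    have h2 : c • (tprod L fun i => (1 : L) ⊗ₜ[K] x i) =
        tprod L fun i => (Function.update (fun _ : Fin d => (1 : L)) i₀ c) i ⊗ₜ[K] x i := by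
      rw [h3, MultilinearMap.map_update_smul, Function.update_eq_self]
    rw [h1, h2, psiMap_tprod]
    congr 1
    rw [Finset.prod_update_of_mem (Finset.mem_univ i₀)]
    simp
  | zero => simp
  | add y z _ _ hy hz =>
    rw [map_add, smul_add, map_add, hy, hz, smul_add]
  | smul k y _ hy =>
    rw [(tensorBaseChange K L V).map_smul, smul_comm c k, (psiMap K L V φ).map_smul, hy,
      smul_comm]

end PsiPartMul


/-- Let `K` be a field, `V₁,…,V_d` finite-dimensional `K`-vector spaces,
`m ≥ 1`, and `t̲ ∈ (V₁ ⊗ ⋯ ⊗ V_d)^m`. Let `L` be a field extension of `K` with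
`e := [L:K] < ∞`. Then the collective partition rank satisfies
`prk_K(t̲) ≤ e · prk_L(t̲)`. -/
theorem collectivePrk_le_finrank_mul_collectivePrk_extension
    (K L : Type*) [Field K] [Field L] [Algebra K L] [FiniteDimensional K L]
    (d : ℕ) (hd : 2 ≤ d) (V : Fin d → Type*) [∀ i, AddCommGroup (V i)]
    [∀ i, Module K (V i)] [∀ i, FiniteDimensional K (V i)]
    (m : ℕ) (hm : 1 ≤ m) (t : Fin m → ⨂[K] i, V i) :
    collectivePrk K V t ≤
      Module.finrank K L *
        collectivePrk L (fun i => L ⊗[K] V i)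
          (fun ℓ => tensorBaseChange K L V (t ℓ)) := by
  classical
  have hd0 : 0 < d := by omega
  set tL : Fin m → ⨂[L] i, L ⊗[K] V i := fun ℓ => tensorBaseChange K L V (t ℓ) with htL
  have hsetne : {r | CollectivePrkDecomp L (fun i => L ⊗[K] V i) tL r}.Nonempty := by
    obtain ⟨r0, hr0⟩ := exists_prkDecomp L (fun i => L ⊗[K] V i) hd
      (∑ ℓ, (Pi.single (⟨0, hm⟩ : Fin m) (1 : L) : Fin m → L) ℓ • tL ℓ)
    refine ⟨r0, (Pi.single (⟨0, hm⟩ : Fin m) (1 : L) : Fin m → L), fun hc0 => ?_, hr0⟩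
    have := congrFun hc0 ⟨0, hm⟩
    simp at this
  have hmem : CollectivePrkDecomp L (fun i => L ⊗[K] V i) tL
      (collectivePrk L (fun i => L ⊗[K] V i) tL) := Nat.sInf_mem hsetne
  obtain ⟨c, hc, I, hI, a, b, hsum⟩ := hmem
  obtain ⟨ℓ₀, hℓ₀⟩ := Function.ne_iff.mp hc
  have hrepr : (Module.finBasis K L).repr (c ℓ₀) ≠ 0 := fun h =>
    hℓ₀ (by simpa using (LinearEquiv.map_eq_zero_iff (Module.finBasis K L).repr).mp h)
  obtain ⟨j₀, hj₀⟩ := Finsupp.ne_iff.mp hrepr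
  set φ : L →ₗ[K] K := (Module.finBasis K L).coord j₀ with hφ
  apply Nat.sInf_le
  refine ⟨fun ℓ => φ (c ℓ), fun h0 => ?_, ?_⟩
  · have := congrFun h0 ℓ₀
    simp only [hφ, Module.Basis.coord_apply, Pi.zero_apply] at this
    exact hj₀ (by simpa using this)
  · have happ : (∑ ℓ, φ (c ℓ) • t ℓ) = ∑ k, ∑ j, partMul K V (I k)
        (psiMap K L (fun i : {x : Fin d // x ∈ I k} => V i)
          ((Module.finBasis K L).coord j) (a k))
        (psiMap K L (fun i : {x : Fin d // x ∉ I k} => V i)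
          (φ ∘ₗ LinearMap.mulLeft K (Module.finBasis K L j)) (b k)) := by
      have h1 : psiMap K L V φ (∑ ℓ, c ℓ • tL ℓ) = ∑ ℓ, φ (c ℓ) • t ℓ := by
        rw [map_sum]
        exact Finset.sum_congr rfl fun ℓ _ =>
          psiMap_smul_baseChange K L V hd0 φ (c ℓ) (t ℓ)
      rw [← h1, hsum, map_sum]
      exact Finset.sum_congr rfl fun k _ =>
        psiMap_partMul K L V (I k) (hI k).1 (hI k).2 φ (a k) (b k)
    rw [happ]
    exact prkDecomp_doubleSum K V I hI _ _
end

section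
/- Let K be a field and f ∈ K[x₁,…,xₙ] a form of degree d ≥ 2. Let L be a field extension of K with e := [L:K] < ∞. Then s_K(f) ≤ e · s_L(f). -/
open MvPolynomial

/-- The border strength of a degree-`d` form `f` over `K`: the minimal `r` such that `f`,
viewed over the algebraic closure, lies in the Zariski closure of the set of degree-`d`
forms of strength at most `r`. -/
noncomputable def borderStrength (K : Type*) [Field K] {σ : Type*} (d : ℕ)
    (f : MvPolynomial σ K) : ℕ :=
  sInf {r | MemZariskiClosure (AlgebraicClosure K)
    {g : MvPolynomial σ (AlgebraicClosure K) | g.IsHomogeneous d ∧ StrengthDecomp g r}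
    (MvPolynomial.map (algebraMap K (AlgebraicClosure K)) f)}

/-!
Choose a `K`-linear retraction `π : L → K` of `algebraMap K L` and a `K`-basis `(βⱼ)` of `L`.
If `f = ∑ᵢ aᵢ bᵢ` over `L`, expand `aᵢ = ∑ⱼ βⱼ aᵢⱼ` with the `aᵢⱼ` defined over `K`. Applying `π`
to every coefficient fixes `f` and is `K[x]`-linear, so `f = ∑ᵢⱼ aᵢⱼ · π(βⱼ bᵢ)`: a sum of
`e · r` products of forms of the same positive degrees as before.
-/

namespace MvPolynomial

variable {K σ : Type*} [CommSemiring K]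

section lmap

variable {R S : Type*} [CommSemiring R] [CommSemiring S] [Module K R] [Module K S]

noncomputable def lmap (π : R →ₗ[K] S) : MvPolynomial σ R →ₗ[K] MvPolynomial σ S where
  toFun p := AddMonoidAlgebra.map π.toAddMonoidHom p
  map_add' := AddMonoidAlgebra.map_add _
  map_smul' c p := by ext α; simp

@[simp]
theorem coeff_lmap (π : R →ₗ[K] S) (p : MvPolynomial σ R) (α : σ →₀ ℕ) :
    coeff α (lmap π p) = π (coeff α p) := rfl

theorem IsHomogeneous.lmap (π : R →ₗ[K] S) {p : MvPolynomial σ R} {d : ℕ}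
    (hp : p.IsHomogeneous d) : (lmap π p).IsHomogeneous d := fun α hα =>
  hp fun h => hα (by rw [coeff_lmap, h, map_zero])

end lmap

variable {L : Type*} [CommSemiring L] [Algebra K L]

theorem lmap_map_mul (π : L →ₗ[K] K) (g : MvPolynomial σ K) (h : MvPolynomial σ L) :
    lmap π (map (algebraMap K L) g * h) = g * lmap π h := by
  classical
  ext α
  simp only [coeff_lmap, coeff_mul, map_sum, coeff_map, ← Algebra.smul_def, map_smul,
    smul_eq_mul]

theorem lmap_map (π : L →ₗ[K] K) (hπ : ∀ c, π (algebraMap K L c) = c)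
    (f : MvPolynomial σ K) : lmap π (map (algebraMap K L) f) = f := by
  ext α
  rw [coeff_lmap, coeff_map, hπ]

theorem sum_C_mul_map_lmap_coord {ι : Type*} [Fintype ι] (B : Module.Basis ι K L)
    (p : MvPolynomial σ L) :
    ∑ j, C (B j) * map (algebraMap K L) (lmap (B.coord j) p) = p := by
  ext α
  simp only [coeff_sum, coeff_C_mul, coeff_map, coeff_lmap, Module.Basis.coord_apply,
    mul_comm (B _), ← Algebra.smul_def, B.sum_repr]

end MvPolynomial

namespace StrengthDecomp

variable {K σ : Type*} [CommSemiring K] {f : MvPolynomial σ K} {r : ℕ}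

theorem of_fintype {ι : Type*} [Fintype ι] (a b : ι → MvPolynomial σ K) (da db : ι → ℕ)
    (h : ∀ i, 0 < da i ∧ 0 < db i ∧ (a i).IsHomogeneous (da i) ∧ (b i).IsHomogeneous (db i))
    (hf : f = ∑ i, a i * b i) : StrengthDecomp f (Fintype.card ι) := by
  classical
  let e := Fintype.equivFin ι
  refine ⟨a ∘ e.symm, b ∘ e.symm, da ∘ e.symm, db ∘ e.symm, fun i => h _, ?_⟩
  rw [hf]
  exact (e.symm.sum_comp fun i => a i * b i).symm

theorem sum {ι : Type*} [Fintype ι] {g : ι → MvPolynomial σ K} {m : ℕ}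
    (h : ∀ i, StrengthDecomp (g i) m) : StrengthDecomp (∑ i, g i) (Fintype.card ι * m) := by
  choose a b da db hab hg using h
  have := of_fintype (f := ∑ i, g i) (fun p : ι × Fin m => a p.1 p.2) (fun p => b p.1 p.2)
    (fun p => da p.1 p.2) (fun p => db p.1 p.2) (fun p => hab p.1 p.2)
    (by rw [Fintype.sum_prod_type]; exact Finset.sum_congr rfl fun i _ => hg i)
  simpa using this

theorem map {L : Type*} [CommSemiring L] (φ : K →+* L) (h : StrengthDecomp f r) :
    StrengthDecomp (map φ f) r := by
  obtain ⟨a, b, da, db, hab, rfl⟩ := h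
  refine ⟨fun i => MvPolynomial.map φ (a i), fun i => MvPolynomial.map φ (b i), da, db,
    fun i => ?_, by simp⟩
  obtain ⟨hda, hdb, ha, hb⟩ := hab i
  exact ⟨hda, hdb, ha.map φ, hb.map φ⟩

variable {L ι : Type*} [CommSemiring L] [Algebra K L] [Fintype ι]

theorem lmap_mul (B : Module.Basis ι K L) (π : L →ₗ[K] K) {a b : MvPolynomial σ L} {da db : ℕ}
    (hda : 0 < da) (hdb : 0 < db) (ha : a.IsHomogeneous da) (hb : b.IsHomogeneous db) :
    StrengthDecomp (lmap π (a * b)) (Fintype.card ι) := by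
  refine of_fintype (fun j => lmap (B.coord j) a) (fun j => lmap π (C (B j) * b))
    (fun _ => da) (fun _ => db)
    (fun j => ⟨hda, hdb, ha.lmap _, by simpa using ((isHomogeneous_C _ (B j)).mul hb).lmap π⟩) ?_
  conv_lhs => rw [← sum_C_mul_map_lmap_coord B a, Finset.sum_mul, map_sum]
  refine Finset.sum_congr rfl fun j _ => ?_
  rw [mul_comm (C _), mul_assoc, lmap_map_mul]

theorem of_map (B : Module.Basis ι K L) (π : L →ₗ[K] K) (hπ : ∀ c, π (algebraMap K L c) = c)
    (h : StrengthDecomp (MvPolynomial.map (algebraMap K L) f) r) :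
    StrengthDecomp f (Fintype.card ι * r) := by
  obtain ⟨a, b, da, db, hab, hf⟩ := h
  have hsum : f = ∑ i, lmap π (a i * b i) := by rw [← lmap_map π hπ f, hf, map_sum]
  rw [hsum, mul_comm]
  simpa using sum fun i => lmap_mul B π (hab i).1 (hab i).2.1 (hab i).2.2.1 (hab i).2.2.2

end StrengthDecomp

theorem strength_le_card_mul_strength_map {K L σ ι : Type*} [CommSemiring K] [CommSemiring L]
    [Algebra K L] [Fintype ι] (B : Module.Basis ι K L) (π : L →ₗ[K] K)
    (hπ : ∀ c, π (algebraMap K L c) = c) (f : MvPolynomial σ K) :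
    strength f ≤ Fintype.card ι * strength (map (algebraMap K L) f) := by
  by_cases h : StrengthDecomp (map (algebraMap K L) f) (strength (map (algebraMap K L) f))
  · exact Nat.sInf_le (h.of_map B π hπ)
  · -- then `f` has no decomposition either, and `strength f` is the junk value `sInf ∅ = 0`
    have hK : ∀ r, ¬StrengthDecomp f r := fun r hr =>
      h (Nat.sInf_mem (s := {r | StrengthDecomp (map (algebraMap K L) f) r}) ⟨r, hr.map _⟩)
    simp [strength, hK]

theorem strength_le_finrank_mul_strength_extension_general
    (K L : Type*) [Field K] [Field L] [Algebra K L] [FiniteDimensional K L]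
    (n : ℕ) (f : MvPolynomial (Fin n) K) :
    strength f ≤ Module.finrank K L * strength (MvPolynomial.map (algebraMap K L) f) := by
  obtain ⟨π, hπ⟩ := (Algebra.linearMap K L).exists_leftInverse_of_injective
    (LinearMap.ker_eq_bot.mpr (algebraMap K L).injective)
  simpa using strength_le_card_mul_strength_map (Module.finBasis K L) π (LinearMap.congr_fun hπ) f

/-- Let `K` be a field and `f ∈ K[x₁,…,xₙ]` a form of degree `d ≥ 2`.
Let `L` be a field extension of `K` with `e := [L:K] < ∞`. Then `s_K(f) ≤ e · s_L(f)`. -/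
theorem strength_le_finrank_mul_strength_extension
    (K L : Type*) [Field K] [Field L] [Algebra K L] [FiniteDimensional K L]
    (n d : ℕ) (hd : 2 ≤ d) (f : MvPolynomial (Fin n) K) (hf : f.IsHomogeneous d) :
    strength f ≤ Module.finrank K L * strength (MvPolynomial.map (algebraMap K L) f) :=
  strength_le_finrank_mul_strength_extension_general K L n f
end

section
/- For every n ≥ 1, the strength of the quadratic form f = x₁² + ⋯ + xₙ² over the real numbers equals n, i.e. s_ℝ(x₁² + ⋯ + xₙ²) = n. -/
open MvPolynomial

/-! In a decomposition `f = ∑ aᵢ bᵢ` of a quadratic form only the products of two linear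
forms survive in degree 2, so `f` is a sum of `r` terms `ℓᵢ mᵢ` with `ℓᵢ` linear. If `r < n`
the `ℓᵢ` have a common nonzero zero `v`, and `f v = 0`; for `x₁² + ⋯ + xₙ²` over `ℝ` this
forces `v = 0`. The obvious decomposition `∑ xᵢ · xᵢ` gives the upper bound. -/

namespace MvPolynomial

variable {K σ : Type*}

lemma IsHomogeneous.exists_dual_eval_eq [CommSemiring K] {p : MvPolynomial σ K}
    (hp : p.IsHomogeneous 1) : ∃ φ : Module.Dual K (σ → K), ∀ v, eval v p = φ v := by
  rw [← mem_homogeneousSubmodule, homogeneousSubmodule_one_eq_span_X] at hp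
  induction hp using Submodule.span_induction with
  | mem q hq =>
    obtain ⟨j, rfl⟩ := hq
    exact ⟨LinearMap.proj j, fun v => by simp⟩
  | zero => exact ⟨0, fun v => by simp⟩
  | add q q' _ _ hq hq' =>
    obtain ⟨φ, hφ⟩ := hq
    obtain ⟨φ', hφ'⟩ := hq'
    exact ⟨φ + φ', fun v => by simp [hφ, hφ']⟩
  | smul c q _ hq =>
    obtain ⟨φ, hφ⟩ := hq
    exact ⟨c • φ, fun v => by simp [hφ, smul_eval]⟩

lemma exists_ne_zero_forall_eval_eq_zero [Field K] [Fintype σ] {r : ℕ}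
    {ℓ : Fin r → MvPolynomial σ K} (hℓ : ∀ i, (ℓ i).IsHomogeneous 1)
    (hr : r < Fintype.card σ) : ∃ v ≠ 0, ∀ i, eval v (ℓ i) = 0 := by
  choose φ hφ using fun i => (hℓ i).exists_dual_eval_eq
  have hker : LinearMap.ker (LinearMap.pi φ) ≠ ⊥ :=
    LinearMap.ker_ne_bot_of_finrank_lt (by simpa using hr)
  obtain ⟨v, hv, hv0⟩ := (Submodule.ne_bot_iff _).mp hker
  exact ⟨v, hv0, fun i => (hφ i v).trans (congrFun hv i)⟩

lemma eval_sum_X_sq_eq_zero [CommRing K] [LinearOrder K] [IsStrictOrderedRing K] [Fintype σ]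
    {v : σ → K} (hv : eval v (∑ i, X i ^ 2) = 0) : v = 0 := by
  simp only [map_sum, sq, map_mul, eval_X] at hv
  funext i
  exact (Finset.sum_mul_self_eq_zero_iff _ _).mp hv i (Finset.mem_univ i)

end MvPolynomial

open MvPolynomial

namespace StrengthDecomp

variable {K σ : Type*}

/-- Only the terms `a i * b i` with `deg a i = deg b i = 1` contribute to a quadratic form. -/
lemma exists_linear_of_isHomogeneous_two [CommSemiring K] {f : MvPolynomial σ K} {r : ℕ}
    (hf : f.IsHomogeneous 2) (h : StrengthDecomp f r) :
    ∃ ℓ m : Fin r → MvPolynomial σ K, (∀ i, (ℓ i).IsHomogeneous 1) ∧ f = ∑ i, ℓ i * m i := by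
  classical
  obtain ⟨a, b, da, db, hab, rfl⟩ := h
  refine ⟨fun i => if da i + db i = 2 then a i else 0, b, fun i => ?_, ?_⟩
  · dsimp only
    split_ifs with h2
    · obtain ⟨hda, hdb, ha, -⟩ := hab i
      exact (show da i = 1 by omega) ▸ ha
    · exact isHomogeneous_zero _ _ _
  · conv_lhs => rw [← homogeneousComponent_eq_self hf, map_sum]
    refine Finset.sum_congr rfl fun i _ => ?_
    rw [homogeneousComponent_of_mem ((hab i).2.2.1.mul (hab i).2.2.2)]
    split_ifs <;> simp_all [eq_comm]

lemma card_le_of_anisotropic [Field K] [Fintype σ] {f : MvPolynomial σ K} {r : ℕ}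
    (hf : f.IsHomogeneous 2) (hanis : ∀ v, eval v f = 0 → v = 0) (h : StrengthDecomp f r) :
    Fintype.card σ ≤ r := by
  obtain ⟨ℓ, m, hℓ, rfl⟩ := h.exists_linear_of_isHomogeneous_two hf
  by_contra! hr
  obtain ⟨v, hv0, hv⟩ := exists_ne_zero_forall_eval_eq_zero hℓ hr
  exact hv0 (hanis v (by simp [hv]))

end StrengthDecomp

lemma strengthDecomp_sum_X_sq (K : Type*) [CommSemiring K] (n : ℕ) :
    StrengthDecomp (∑ i : Fin n, (X i : MvPolynomial (Fin n) K) ^ 2) n :=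
  ⟨X, X, fun _ => 1, fun _ => 1, fun i => ⟨one_pos, one_pos, isHomogeneous_X K i,
    isHomogeneous_X K i⟩, by simp only [sq]⟩

theorem strength_sum_sq_real_general (n : ℕ) :
    strength (∑ i : Fin n, (MvPolynomial.X i : MvPolynomial (Fin n) ℝ) ^ 2) = n := by
  have hdecomp := strengthDecomp_sum_X_sq ℝ n
  have hhom : (∑ i : Fin n, (X i : MvPolynomial (Fin n) ℝ) ^ 2).IsHomogeneous 2 :=
    IsHomogeneous.sum _ _ _ fun i _ => isHomogeneous_X_pow i 2
  refine le_antisymm (Nat.sInf_le hdecomp) (le_csInf ⟨n, hdecomp⟩ fun r hr => ?_)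
  simpa using hr.card_le_of_anisotropic hhom fun v => eval_sum_X_sq_eq_zero

/-- For every `n ≥ 1`, the strength of `x₁² + ⋯ + xₙ²` over `ℝ`
equals `n`. -/
theorem strength_sum_sq_real (n : ℕ) (hn : 1 ≤ n) :
    strength (∑ i : Fin n, (MvPolynomial.X i : MvPolynomial (Fin n) ℝ) ^ 2) = n :=
  strength_sum_sq_real_general n
end
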